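/- arXiv:2105.00853 — 5 statements merged into one kernel-verified Lean document; each statement's English description precedes it below -/
import Mathlib

section
/- Let p ≥ 1 and n ≥ p, and let t_0 ≤ t_1 ≤ … ≤ t_{n+p} be a knot vector. Write Δt_i := t_{i+1} − t_i and T := t_n − t_p. If the knots near both ends are equidistant, i.e. Δt_i = Δt_{i+n−p} for all i = 0, …, 2p−1, then the B-spline functions satisfy the translation property: for every i = 0, …, p−1, every k = 0, …, p−1, and every t ∈ ℝ, the k-th iterated derivative of B_i^p at t equals the k-th iterated derivative of B_{n−p+i}^p at t + T (in particular, for k = 0, B_i^p(t) = B_{n−p+i}^p(t + T) for all t ∈ ℝ). -/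
/-!
`B_i^p` depends only on the knots `t_i, …, t_{i+p+1}`, and translating all of them by `c`
translates `B_i^p` by `c`. Equal knot spacings at both ends make `t_{n-p+j} = t_j + T` for
`j ≤ 2p`, so `B_{n-p+i}^p` is `B_i^p` translated by `T`, and so are all its derivatives.
-/

/-- The B-spline functions of degree `p` for the knot sequence `t`, defined by the
Cox–de Boor recursion. `bspline t p i` is `B_i^p`. Fractions with zero denominator
are `0` (Lean's convention `x / 0 = 0`). -/
noncomputable def bspline (t : ℕ → ℝ) : ℕ → ℕ → ℝ → ℝ
  | 0, i, x => if t i ≤ x ∧ x < t (i + 1) then 1 else 0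
  | p + 1, i, x =>
      (x - t i) / (t (i + p + 1) - t i) * bspline t p i x +
      (t (i + p + 2) - x) / (t (i + p + 2) - t (i + 1)) * bspline t p (i + 1) x

theorem bspline_congr_knots {t u : ℕ → ℝ} (q i : ℕ)
    (h : ∀ j, i ≤ j → j ≤ i + q + 1 → u j = t j) :
    bspline u q i = bspline t q i := by
  induction q generalizing i with
  | zero =>
    funext x
    simp only [bspline, h i le_rfl (by omega), h (i + 1) (by omega) le_rfl]
  | succ q ih =>
    funext x
    have hi : bspline u q i = bspline t q i := ih i fun j hij hj => h j hij (by omega)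
    have hi' : bspline u q (i + 1) = bspline t q (i + 1) :=
      ih (i + 1) fun j hij hj => h j (by omega) (by omega)
    simp only [bspline, hi, hi', h i le_rfl (by omega), h (i + 1) (by omega) (by omega),
      h (i + q + 1) (by omega) (by omega), h (i + q + 2) (by omega) (by omega)]

theorem bspline_knots_add_const (t : ℕ → ℝ) (c : ℝ) (q i : ℕ) (x : ℝ) :
    bspline (fun j => t j + c) q i (x + c) = bspline t q i x := by
  induction q generalizing i with
  | zero => simp [bspline]
  | succ q ih =>
    simp only [bspline, ih, add_sub_add_right_eq_sub]

theorem bspline_knots_shift (t : ℕ → ℝ) (m q i : ℕ) :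
    bspline (fun j => t (m + j)) q i = bspline t q (m + i) := by
  induction q generalizing i with
  | zero => funext x; simp [bspline, add_assoc]
  | succ q ih =>
    funext x
    simp only [bspline, ih, add_assoc]

theorem add_sub_eq_of_forall_sub_eq {t : ℕ → ℝ} {m N : ℕ}
    (h : ∀ i < N, t (i + 1) - t i = t (i + m + 1) - t (i + m)) {j : ℕ} (hj : j ≤ N) :
    t (j + m) - t j = t m - t 0 := by
  induction j with
  | zero => simp
  | succ j ih =>
    rw [show j + 1 + m = j + m + 1 by omega]
    linarith [h j (by omega), ih (by omega)]

theorem bspline_translation_general (p n : ℕ) (hn : p ≤ n)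
    (t : ℕ → ℝ)
    (hequi : ∀ i < 2 * p, t (i + 1) - t i = t (i + (n - p) + 1) - t (i + (n - p))) :
    ∀ i < p, ∀ k < p, ∀ s : ℝ,
      iteratedDeriv k (bspline t p i) s =
        iteratedDeriv k (bspline t p (n - p + i)) (s + (t n - t p)) := by
  set T := t n - t p
  have hknots : ∀ j ≤ 2 * p, t (n - p + j) = t j + T := by
    intro j hj
    have hT := add_sub_eq_of_forall_sub_eq hequi (j := p) (by omega)
    rw [show p + (n - p) = n by omega] at hT
    rw [add_comm]
    linarith [add_sub_eq_of_forall_sub_eq hequi hj]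
  intro i hi k _ s
  have htranslate : bspline t p i = fun x => bspline t p (n - p + i) (x + T) := by
    funext x
    rw [← bspline_knots_shift,
      bspline_congr_knots p i fun j _ hj => hknots j (by omega), bspline_knots_add_const]
  rw [htranslate, iteratedDeriv_comp_add_const]

/-- Translation property of B-splines whose knots are equidistant near both ends
(Lemma 1 of the paper). -/
theorem bspline_translation (p n : ℕ) (hp : 1 ≤ p) (hn : p ≤ n)
    (t : ℕ → ℝ) (hmono : ∀ i < n + p, t i ≤ t (i + 1))
    (hequi : ∀ i < 2 * p, t (i + 1) - t i = t (i + (n - p) + 1) - t (i + (n - p))) :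
    ∀ i < p, ∀ k < p, ∀ s : ℝ,
      iteratedDeriv k (bspline t p i) s =
        iteratedDeriv k (bspline t p (n - p + i)) (s + (t n - t p)) :=
  bspline_translation_general p n hn t hequi
end

section
/- Let p ≥ 1 and n > p, and let t_0 < t_1 < … < t_{n+p} be a strictly increasing knot vector satisfying Δt_i = Δt_{i+n−p} for all i = 0, …, 2p−1, where Δt_i := t_{i+1} − t_i. Let y_0, …, y_{n−1} ∈ ℝ satisfy y_i = y_{n−p+i} for i = 0, …, p−1. Define y(t) := Σ_{i=0}^{n−1} B_i^p(t) y_i. Then for every k = 0, …, p−1 the k-th iterated derivative of y at t_p equals the k-th iterated derivative of y at t_n. -/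
/-!
With simple knots, `B_i^p(x) = (t_{i+p+1} - t_i) [t_i, …, t_{i+p+1}] (· - x)₊ ^ p` is a
combination of truncated powers of degree `p`, hence of class `C^{p-1}`. As `B_i^p` vanishes
outside `[t_i, t_{i+p+1})`, its derivatives of order `< p` vanish at both ends of that interval.
So the `k`-th derivative of `Y` at `t_p` only sees `B_0, …, B_{p-1}`, and at `t_n` only
`B_{n-p}, …, B_{n-1}`. The periodicity of the knot spacings makes the latter translates of the
former by `t_n - t_p`, and the periodicity of the control values matches their coefficients.
-/

open Finset Topology Asymptotics

/-- The truncated power `(c - x)₊ ^ q`; at `x = c` it is `0`, also for `q = 0`. -/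
noncomputable def truncPow (c : ℝ) (q : ℕ) (x : ℝ) : ℝ := if x < c then (c - x) ^ q else 0

section truncPow

variable {c : ℝ}

lemma truncPow_of_le {x : ℝ} (q : ℕ) (h : c ≤ x) : truncPow c q x = 0 := by
  simp [truncPow, not_lt.2 h]

lemma truncPow_succ (q : ℕ) (x : ℝ) : truncPow c (q + 1) x = (c - x) * truncPow c q x := by
  unfold truncPow
  split_ifs <;> ring

lemma abs_truncPow_le (q : ℕ) (x : ℝ) : |truncPow c q x| ≤ |x - c| ^ q := by
  unfold truncPow
  split_ifs
  · rw [abs_pow, abs_sub_comm]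
  · simp

lemma continuous_truncPow {q : ℕ} (hq : q ≠ 0) : Continuous (truncPow c q) := by
  have : truncPow c q = fun x => max (c - x) 0 ^ q := by
    funext x
    unfold truncPow
    split_ifs with h
    · rw [max_eq_left (by linarith)]
    · rw [max_eq_right (by linarith), zero_pow hq]
  rw [this]
  fun_prop

lemma hasDerivAt_truncPow {q : ℕ} (hq : q ≠ 0) (x : ℝ) :
    HasDerivAt (truncPow c (q + 1)) (-(q + 1) * truncPow c q x) x := by
  rcases lt_trichotomy x c with h | rfl | h
  · have hev : (fun y => (c - y) ^ (q + 1)) =ᶠ[𝓝 x] truncPow c (q + 1) := by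
      filter_upwards [Iio_mem_nhds h] with y hy
      simp [truncPow, Set.mem_Iio.1 hy]
    refine ((((hasDerivAt_id x).const_sub c).pow (q + 1)).congr_of_eventuallyEq
      hev.symm).congr_deriv ?_
    simp [truncPow, h]
    ring
  · -- at the knot the function is `O(|y - x| ^ (q + 1)) = o(y - x)`
    refine HasDerivAt.of_isLittleO ?_
    simp only [truncPow_of_le _ le_rfl, mul_zero, smul_zero, sub_zero]
    refine (isBigO_of_le _ fun y => ?_).trans_isLittleO
      (isLittleO_pow_sub_sub x (m := q + 1) (by omega))
    simpa using abs_truncPow_le (q + 1) y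
  · have hev : (fun _ => (0 : ℝ)) =ᶠ[𝓝 x] truncPow c (q + 1) := by
      filter_upwards [Ioi_mem_nhds h] with y hy
      exact (truncPow_of_le _ (le_of_lt hy)).symm
    refine ((hasDerivAt_const x (0 : ℝ)).congr_of_eventuallyEq hev.symm).congr_deriv ?_
    simp [truncPow_of_le _ h.le]

lemma contDiff_truncPow {k q : ℕ} (hk : k < q) : ContDiff ℝ k (truncPow c q) := by
  induction k generalizing q with
  | zero => exact contDiff_zero.2 (continuous_truncPow (by omega))
  | succ k ih =>
    obtain ⟨q, rfl⟩ : ∃ m, q = m + 1 := ⟨q - 1, by omega⟩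
    have hderiv (x : ℝ) := hasDerivAt_truncPow (c := c) (q := q) (by omega) x
    push_cast
    refine contDiff_succ_iff_deriv.2 ⟨fun x => (hderiv x).differentiableAt, by simp, ?_⟩
    rw [funext fun x => (hderiv x).deriv]
    exact contDiff_const.mul (ih (by omega))

end truncPow

/-- The coefficient of `f (t (i + j))` in the divided difference `[t i, …, t (i + p + 1)] f`. -/
noncomputable def divDiffWeight (t : ℕ → ℝ) (p i j : ℕ) : ℝ :=
  (∏ l ∈ range (p + 2) with l ≠ j, (t (i + j) - t (i + l)))⁻¹

section divDiffWeight

variable {t : ℕ → ℝ} {p i : ℕ}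

lemma divDiffWeight_eq_mul_sub_last {j : ℕ} (hj : j < p + 2)
    (hne : t (i + j) ≠ t (i + (p + 2))) :
    divDiffWeight t p i j = divDiffWeight t (p + 1) i j * (t (i + j) - t (i + (p + 2))) := by
  unfold divDiffWeight
  rw [prod_filter, prod_filter, show p + 1 + 2 = p + 2 + 1 from rfl, prod_range_succ _ (p + 2),
    if_pos (by omega), mul_inv, mul_assoc, inv_mul_cancel₀ (sub_ne_zero.2 hne), mul_one]

lemma divDiffWeight_add_one_eq_mul_sub_first {m : ℕ} (hne : t (i + (m + 1)) ≠ t i) :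
    divDiffWeight t p (i + 1) m = divDiffWeight t (p + 1) i (m + 1) * (t (i + (m + 1)) - t i) := by
  unfold divDiffWeight
  rw [prod_filter, prod_filter, show p + 1 + 2 = p + 2 + 1 from rfl, prod_range_succ' _ (p + 2),
    if_pos (by omega), add_zero, mul_inv, mul_assoc, inv_mul_cancel₀ (sub_ne_zero.2 hne), mul_one]
  congr 1
  refine prod_congr rfl fun l _ => ?_
  simp only [ne_eq, add_left_inj, show i + 1 + m = i + (m + 1) by omega,
    show i + 1 + l = i + (l + 1) by omega]

end divDiffWeight

theorem bspline_eq_sum_truncPow {t : ℕ → ℝ} {p i : ℕ}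
    (ht : StrictMonoOn t (Set.Icc i (i + p + 1))) (x : ℝ) :
    bspline t p i x = (t (i + p + 1) - t i) *
      ∑ j ∈ range (p + 2), divDiffWeight t p i j * truncPow (t (i + j)) p x := by
  induction p generalizing i with
  | zero =>
    have h : t i < t (i + 1) := ht (by simp) (by simp) (by omega)
    have hd : t (i + 1) - t i ≠ 0 := sub_ne_zero.2 h.ne'
    have hw0 : divDiffWeight t 0 i 0 = -(t (i + 1) - t i)⁻¹ := by
      simp [divDiffWeight, prod_filter, prod_range_succ, ← inv_neg]
    have hw1 : divDiffWeight t 0 i 1 = (t (i + 1) - t i)⁻¹ := by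
      simp [divDiffWeight, prod_filter, prod_range_succ]
    rw [sum_range_succ, sum_range_one, hw0, hw1, add_zero,
      show (t (i + 1) - t i) * (-(t (i + 1) - t i)⁻¹ * truncPow (t i) 0 x +
        (t (i + 1) - t i)⁻¹ * truncPow (t (i + 1)) 0 x) =
          truncPow (t (i + 1)) 0 x - truncPow (t i) 0 x by field_simp; ring]
    simp only [bspline, truncPow, pow_zero]
    split_ifs <;> grind
  | succ p ih =>
    have hlt : ∀ a b, a < b → b ≤ p + 2 → t (i + a) < t (i + b) := fun a b hab hb =>
      ht (by simp; omega) (by simp; omega) (by omega)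
    have hB0 := ih (ht.mono (Set.Icc_subset_Icc le_rfl (by omega)))
    have hB1 := ih (i := i + 1) (ht.mono (Set.Icc_subset_Icc (by omega) (by omega)))
    have hS0 : ∑ j ∈ range (p + 2), divDiffWeight t p i j * truncPow (t (i + j)) p x =
        ∑ j ∈ range (p + 3), divDiffWeight t (p + 1) i j * (t (i + j) - t (i + (p + 2))) *
          truncPow (t (i + j)) p x := by
      rw [sum_range_succ _ (p + 2), sub_self, mul_zero, zero_mul, add_zero]
      refine sum_congr rfl fun j hj => ?_
      have hj := mem_range.1 hj
      rw [divDiffWeight_eq_mul_sub_last hj (hlt j (p + 2) hj le_rfl).ne]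
    have hS1 : ∑ m ∈ range (p + 2), divDiffWeight t p (i + 1) m * truncPow (t (i + 1 + m)) p x =
        ∑ j ∈ range (p + 3),
          divDiffWeight t (p + 1) i j * (t (i + j) - t i) * truncPow (t (i + j)) p x := by
      rw [sum_range_succ' _ (p + 2), add_zero, sub_self, mul_zero, zero_mul, add_zero]
      refine sum_congr rfl fun m hm => ?_
      have hm := mem_range.1 hm
      rw [divDiffWeight_add_one_eq_mul_sub_first (hlt 0 (m + 1) (by omega) (by omega)).ne',
        show i + 1 + m = i + (m + 1) by omega]
    have hD0 : t (i + p + 1) - t i ≠ 0 := sub_ne_zero.2 (hlt 0 (p + 1) (by omega) (by omega)).ne'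
    have hD1 : t (i + p + 2) - t (i + 1) ≠ 0 :=
      sub_ne_zero.2 (hlt 1 (p + 2) (by omega) le_rfl).ne'
    rw [bspline, hB0, hB1, hS0, show i + 1 + p + 1 = i + p + 2 by omega, hS1, ← mul_assoc,
      div_mul_cancel₀ _ hD0, ← mul_assoc, div_mul_cancel₀ _ hD1, mul_sum, mul_sum,
      ← sum_add_distrib, mul_sum]
    refine sum_congr rfl fun j _ => ?_
    rw [truncPow_succ, show i + (p + 1) + 1 = i + p + 2 by omega,
      show i + (p + 2) = i + p + 2 by omega]
    -- with `a = t i`, `b = t (i + p + 2)`, `s = t (i + j)`: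
    -- `(x - a) (s - b) + (b - x) (s - a) = (b - a) (s - x)`
    ring

section support

variable {t : ℕ → ℝ} {p i : ℕ} {x : ℝ}

lemma bspline_eq_zero_of_lt (ht : MonotoneOn t (Set.Icc i (i + p + 1))) (hx : x < t i) :
    bspline t p i x = 0 := by
  induction p generalizing i with
  | zero => simp [bspline, not_le.2 hx]
  | succ p ih =>
    have hi : t i ≤ t (i + 1) := ht ⟨by omega, by omega⟩ ⟨by omega, by omega⟩ (by omega)
    rw [bspline, ih (ht.mono (Set.Icc_subset_Icc le_rfl (by omega))) hx,
      ih (ht.mono (Set.Icc_subset_Icc (by omega) (by omega))) (hx.trans_le hi)]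
    simp

lemma bspline_eq_zero_of_le (ht : MonotoneOn t (Set.Icc i (i + p + 1))) (hx : t (i + p + 1) ≤ x) :
    bspline t p i x = 0 := by
  induction p generalizing i with
  | zero => simp [bspline, not_lt.2 hx]
  | succ p ih =>
    have hp : t (i + p + 1) ≤ t (i + p + 2) := ht (by simp; omega) (by simp; omega) (by omega)
    rw [bspline, ih (ht.mono (Set.Icc_subset_Icc le_rfl (by omega))) (hp.trans hx),
      ih (ht.mono (Set.Icc_subset_Icc (by omega) (by omega)))
        (by rwa [show i + 1 + p + 1 = i + (p + 1) + 1 by omega])]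
    simp

end support

theorem contDiff_bspline {t : ℕ → ℝ} {p i k : ℕ}
    (ht : StrictMonoOn t (Set.Icc i (i + p + 1))) (hk : k < p) :
    ContDiff ℝ k (bspline t p i) := by
  rw [funext (bspline_eq_sum_truncPow ht)]
  exact contDiff_const.mul (ContDiff.sum fun j _ => contDiff_const.mul (contDiff_truncPow hk))

lemma iteratedDeriv_eqOn_zero_closure {𝕜 F : Type*} [NontriviallyNormedField 𝕜]
    [NormedAddCommGroup F] [NormedSpace 𝕜 F] {f : 𝕜 → F} {s : Set 𝕜} {k : ℕ}
    (hs : IsOpen s) (hf : Set.EqOn f 0 s) (hk : Continuous (iteratedDeriv k f)) :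
    Set.EqOn (iteratedDeriv k f) 0 (closure s) := by
  refine Set.EqOn.closure (fun x hx => ?_) hk continuous_const
  rw [(hf.eventuallyEq_of_mem (hs.mem_nhds hx)).iteratedDeriv_eq k]
  simp

section iteratedDeriv

variable {t : ℕ → ℝ} {p i k : ℕ} {x : ℝ}

lemma iteratedDeriv_bspline_eq_zero_of_le (ht : StrictMonoOn t (Set.Icc i (i + p + 1)))
    (hk : k < p) (hx : x ≤ t i) : iteratedDeriv k (bspline t p i) x = 0 :=
  iteratedDeriv_eqOn_zero_closure isOpen_Iio (fun _ hy => bspline_eq_zero_of_lt ht.monotoneOn hy)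
    ((contDiff_bspline ht hk).continuous_iteratedDeriv' k) (by rwa [closure_Iio])

lemma iteratedDeriv_bspline_eq_zero_of_ge (ht : StrictMonoOn t (Set.Icc i (i + p + 1)))
    (hk : k < p) (hx : t (i + p + 1) ≤ x) : iteratedDeriv k (bspline t p i) x = 0 :=
  iteratedDeriv_eqOn_zero_closure isOpen_Ioi
    (fun _ hy => bspline_eq_zero_of_le ht.monotoneOn (le_of_lt hy))
    ((contDiff_bspline ht hk).continuous_iteratedDeriv' k) (by rwa [closure_Ioi])

lemma iteratedDeriv_bspline_curve {n : ℕ} (ht : ∀ i < n, StrictMonoOn t (Set.Icc i (i + p + 1)))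
    (hk : k < p) (y : ℕ → ℝ) (x : ℝ) :
    iteratedDeriv k (fun s => ∑ i ∈ range n, bspline t p i s * y i) x =
      ∑ i ∈ range n, iteratedDeriv k (bspline t p i) x * y i := by
  rw [iteratedDeriv_fun_sum fun i hi =>
    ((contDiff_bspline (ht i (mem_range.1 hi)) hk).mul contDiff_const).contDiffAt]
  simp only [iteratedDeriv_mul_const_field]

end iteratedDeriv

lemma bspline_translate {t : ℕ → ℝ} {p i i' : ℕ} (T : ℝ)
    (h : ∀ l ≤ p + 1, t (i' + l) = t (i + l) + T) (x : ℝ) :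
    bspline t p i' (x + T) = bspline t p i x := by
  induction p generalizing i i' with
  | zero =>
    have h0 : t i' = t i + T := by simpa using h 0 (by omega)
    simp only [bspline, h0, h 1 le_rfl, add_le_add_iff_right, add_lt_add_iff_right]
  | succ p ih =>
    have h0 : t i' = t i + T := by simpa using h 0 (by omega)
    rw [bspline, bspline, ih (fun l hl => h l (by omega)),
      ih (i := i + 1) (i' := i' + 1) fun l hl => by
        simpa only [add_assoc, add_comm 1 l] using h (l + 1) (by omega)]
    simp only [add_assoc, h0, h 1 (by omega), h (p + 1) (by omega), h (p + 2) (by omega)]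
    ring

lemma iteratedDeriv_bspline_translate {t : ℕ → ℝ} {p i i' k : ℕ} (T : ℝ)
    (h : ∀ l ≤ p + 1, t (i' + l) = t (i + l) + T) (x : ℝ) :
    iteratedDeriv k (bspline t p i') (x + T) = iteratedDeriv k (bspline t p i) x := by
  have : bspline t p i = fun x => bspline t p i' (x + T) :=
    funext fun x => (bspline_translate T h x).symm
  rw [this, iteratedDeriv_comp_add_const]

section curve

variable {t : ℕ → ℝ} {p n k : ℕ}

lemma sum_iteratedDeriv_bspline_at_start (ht : StrictMonoOn t (Set.Iic (n + p))) (hpn : p ≤ n)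
    (hk : k < p) (y : ℕ → ℝ) :
    ∑ i ∈ range n, iteratedDeriv k (bspline t p i) (t p) * y i =
      ∑ i ∈ range p, iteratedDeriv k (bspline t p i) (t p) * y i := by
  rw [show range n = range (p + (n - p)) by rw [Nat.add_sub_cancel' hpn], sum_range_add,
    add_eq_left]
  refine sum_eq_zero fun i hi => ?_
  have hi := mem_range.1 hi
  rw [iteratedDeriv_bspline_eq_zero_of_le
    (ht.mono (Set.Icc_subset_Iic_self.trans (Set.Iic_subset_Iic.2 (by omega)))) hk
    (ht.monotoneOn (Set.mem_Iic.2 (by omega)) (Set.mem_Iic.2 (by omega)) (by omega)), zero_mul]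

lemma sum_iteratedDeriv_bspline_at_end (ht : StrictMonoOn t (Set.Iic (n + p))) (hpn : p ≤ n)
    (hk : k < p) (y : ℕ → ℝ) :
    ∑ i ∈ range n, iteratedDeriv k (bspline t p i) (t n) * y i =
      ∑ i ∈ range p, iteratedDeriv k (bspline t p (n - p + i)) (t n) * y (n - p + i) := by
  rw [show range n = range (n - p + p) by rw [Nat.sub_add_cancel hpn], sum_range_add,
    add_eq_right]
  refine sum_eq_zero fun i hi => ?_
  have hi := mem_range.1 hi
  rw [iteratedDeriv_bspline_eq_zero_of_ge
    (ht.mono (Set.Icc_subset_Iic_self.trans (Set.Iic_subset_Iic.2 (by omega)))) hk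
    (ht.monotoneOn (Set.mem_Iic.2 (by omega)) (Set.mem_Iic.2 (by omega)) (by omega)), zero_mul]

end curve

lemma eq_add_sub_of_forall_sub_eq {t : ℕ → ℝ} {m N : ℕ}
    (h : ∀ i < N, t (i + 1) - t i = t (i + m + 1) - t (i + m)) :
    ∀ j ≤ N, t (j + m) = t j + (t m - t 0) := by
  intro j hj
  induction j with
  | zero => simp
  | succ j ih =>
    have := h j (by omega)
    rw [show j + 1 + m = j + m + 1 by omega]
    linarith [ih (by omega)]

theorem bspline_curve_y_coordinate_general (p n : ℕ) (hn : p < n)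
    (t : ℕ → ℝ) (hmono : ∀ i < n + p, t i < t (i + 1))
    (hequi : ∀ i < 2 * p, t (i + 1) - t i = t (i + (n - p) + 1) - t (i + (n - p)))
    (y : ℕ → ℝ) (hy : ∀ i < p, y i = y (n - p + i))
    (Y : ℝ → ℝ) (hY : Y = fun s => ∑ i ∈ Finset.range n, bspline t p i s * y i) :
    ∀ k < p, iteratedDeriv k Y (t p) = iteratedDeriv k Y (t n) := by
  intro k hk
  have hstrict : StrictMonoOn t (Set.Iic (n + p)) :=
    strictMonoOn_of_lt_add_one Set.ordConnected_Iic fun a _ _ ha => hmono a (by simp at ha; omega)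
  have hwin : ∀ i < n, StrictMonoOn t (Set.Icc i (i + p + 1)) := fun i hi =>
    hstrict.mono (Set.Icc_subset_Iic_self.trans (Set.Iic_subset_Iic.2 (by omega)))
  have hshift := eq_add_sub_of_forall_sub_eq hequi
  have hpn : t p + (t (n - p) - t 0) = t n := by
    rw [← hshift p (by omega), show p + (n - p) = n by omega]
  rw [hY, iteratedDeriv_bspline_curve hwin hk, iteratedDeriv_bspline_curve hwin hk,
    sum_iteratedDeriv_bspline_at_start hstrict hn.le hk,
    sum_iteratedDeriv_bspline_at_end hstrict hn.le hk]
  refine sum_congr rfl fun i hi => ?_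
  have hi := mem_range.1 hi
  have htranslate := iteratedDeriv_bspline_translate (p := p) (i := i) (i' := i + (n - p)) (k := k)
    (t (n - p) - t 0) (fun l hl => by
      rw [show i + (n - p) + l = i + l + (n - p) by omega]
      exact hshift _ (by omega)) (t p)
  rw [hpn] at htranslate
  rw [← hy i hi, add_comm (n - p) i, htranslate]

/-- Lemma 3 of the paper: the `y`-coordinate of a periodic B-spline curve. -/
theorem bspline_curve_y_coordinate (p n : ℕ) (hp : 1 ≤ p) (hn : p < n)
    (t : ℕ → ℝ) (hmono : ∀ i < n + p, t i < t (i + 1))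
    (hequi : ∀ i < 2 * p, t (i + 1) - t i = t (i + (n - p) + 1) - t (i + (n - p)))
    (y : ℕ → ℝ) (hy : ∀ i < p, y i = y (n - p + i))
    (Y : ℝ → ℝ) (hY : Y = fun s => ∑ i ∈ Finset.range n, bspline t p i s * y i) :
    ∀ k < p, iteratedDeriv k Y (t p) = iteratedDeriv k Y (t n) :=
  bspline_curve_y_coordinate_general p n hn t hmono hequi y hy Y hY
end

section
/- Let p ≥ 1 and n > p, and let t_0 < t_1 < … < t_{n+p} be a strictly increasing knot vector satisfying Δt_i = Δt_{i+n−p} for all i = 0, …, 2p−1, where Δt_i := t_{i+1} − t_i. Let L ∈ ℝ and let control points (x_i, y_i) ∈ ℝ², i = 0, …, n−1, satisfy x_i + L = x_{n−p+i} and y_i = y_{n−p+i} for i = 0, …, p−1. Define the plane B-spline curve (x(t), y(t)) := Σ_{i=0}^{n−1} B_i^p(t) (x_i, y_i). Then x(t_p) + L = x(t_n), and for every k = 0, …, p−1 the k-th iterated derivative of y at t_p equals the k-th iterated derivative of y at t_n. -/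
open Filter Topology Set Finset

section Support

variable {t : ℕ → ℝ}

theorem bspline_congr {t' : ℕ → ℝ} (p i : ℕ) (h : ∀ j, i ≤ j → j ≤ i + p + 1 → t j = t' j) :
    bspline t p i = bspline t' p i := by
  induction p generalizing i with
  | zero =>
    funext x
    simp only [bspline, h i le_rfl (by omega), h (i + 1) (by omega) (by omega)]
  | succ q ih =>
    funext x
    simp only [bspline, h i le_rfl (by omega), h (i + 1) (by omega) (by omega),
      h (i + q + 1) (by omega) (by omega), h (i + q + 2) (by omega) (by omega),
      ih i fun j hj hj' => h j hj (by omega), ih (i + 1) fun j hj hj' => h j (by omega) (by omega)]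

theorem bspline_eq_zero_of_lt_knot (ht : Monotone t) (p : ℕ) {i : ℕ} {x : ℝ} (hx : x < t i) :
    bspline t p i x = 0 := by
  induction p generalizing i with
  | zero => simp [bspline, hx.not_ge]
  | succ q ih => simp [bspline, ih hx, ih (hx.trans_le (ht i.le_succ))]

theorem bspline_eq_zero_of_knot_le (ht : Monotone t) (p : ℕ) {i : ℕ} {x : ℝ}
    (hx : t (i + p + 1) ≤ x) : bspline t p i x = 0 := by
  induction p generalizing i with
  | zero => simp [bspline, hx.not_gt]
  | succ q ih =>
    rw [bspline, ih ((ht (by omega)).trans hx), ih ((ht (by omega)).trans hx)]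
    simp

theorem bspline_succ_eq_zero_of_le_knot (ht : StrictMono t) (p : ℕ) {i : ℕ} {x : ℝ}
    (hx : x ≤ t i) : bspline t (p + 1) i x = 0 := by
  rcases hx.lt_or_eq with hx | rfl
  · exact bspline_eq_zero_of_lt_knot ht.monotone _ hx
  · simp [bspline, bspline_eq_zero_of_lt_knot ht.monotone p (ht i.lt_succ_self)]

theorem bspline_shift {m : ℕ} {T : ℝ} (p i : ℕ)
    (h : ∀ j, i ≤ j → j ≤ i + p + 1 → t (j + m) = t j + T) (x : ℝ) :
    bspline t p (i + m) x = bspline t p i (x - T) := by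
  induction p generalizing i with
  | zero =>
    have h₁ : t (i + m + 1) = t (i + 1) + T := by
      rw [show i + m + 1 = i + 1 + m by omega, h (i + 1) (by omega) (by omega)]
    simp only [bspline, h i le_rfl (by omega), h₁, le_sub_iff_add_le, sub_lt_iff_lt_add]
  | succ q ih =>
    simp only [bspline, ih i fun j hj hj' => h j hj (by omega),
      show i + m + 1 = i + 1 + m by omega, ih (i + 1) fun j hj hj' => h j (by omega) (by omega)]
    rw [h i le_rfl (by omega), h (i + 1) (by omega) (by omega),
      show i + m + q + 1 = i + q + 1 + m by omega, show i + m + q + 2 = i + q + 2 + m by omega,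
      h (i + q + 1) (by omega) (by omega), h (i + q + 2) (by omega) (by omega)]
    simp only [add_sub_add_right_eq_sub]
    ring

theorem sum_bspline_eq_one (ht : StrictMono t) (p b : ℕ) {x : ℝ} (h₁ : t (b + p) ≤ x)
    (h₂ : x < t (b + p + 1)) : ∑ r ∈ range (p + 1), bspline t p (b + r) x = 1 := by
  induction p generalizing b with
  | zero => simp only [zero_add, sum_range_one, add_zero, bspline] at h₁ h₂ ⊢; simp [h₁, h₂]
  | succ q ih =>
    set a : ℕ → ℝ := fun r => (x - t (b + r)) / (t (b + r + q + 1) - t (b + r))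
    set f : ℕ → ℝ := fun r => bspline t q (b + r) x
    -- the two weights of `f (r + 1)` in consecutive terms add up to `1`, so the sum telescopes
    have hrec : ∀ r, bspline t (q + 1) (b + r) x =
        (a r * f r - a (r + 1) * f (r + 1)) + f (r + 1) := by
      intro r
      have hd : t (b + r + q + 2) - t (b + r + 1) ≠ 0 := (sub_pos.2 (ht (by omega))).ne'
      simp only [bspline, a, f, show b + (r + 1) = b + r + 1 by omega,
        show b + r + 1 + q + 1 = b + r + q + 2 by omega]
      field_simp
      ring
    have hf₀ : f 0 = 0 :=
      bspline_eq_zero_of_knot_le ht.monotone q ((ht.monotone (by omega)).trans h₁)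
    have hf₁ : f (q + 2) = 0 :=
      bspline_eq_zero_of_lt_knot ht.monotone q (h₂.trans_le (ht.monotone (by omega)))
    have hsum : ∑ r ∈ range (q + 1), f (r + 1) = 1 := by
      simpa [f, add_assoc, add_comm 1] using
        ih (b + 1) (by rwa [show b + 1 + q = b + (q + 1) by omega])
          (by rwa [show b + 1 + q + 1 = b + (q + 1) + 1 by omega])
    rw [sum_congr rfl fun r _ => hrec r, sum_add_distrib, sum_range_sub', sum_range_succ, hf₀, hf₁,
      hsum]
    ring

end Support

theorem hasDerivAt_of_eventually_hasDerivAt {E : Type*} [NormedAddCommGroup E] [NormedSpace ℝ E]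
    {f g : ℝ → E} {x : ℝ} (hd : ∀ᶠ y in 𝓝[≠] x, HasDerivAt f (g y) y) (hf : ContinuousAt f x)
    (hg : ContinuousAt g x) : HasDerivAt f (g x) x := by
  have hr : ∀ᶠ y in 𝓝[>] x, HasDerivAt f (g y) y := nhdsWithin_mono x (fun y hy => ne_of_gt hy) hd
  have hl : ∀ᶠ y in 𝓝[<] x, HasDerivAt f (g y) y := nhdsWithin_mono x (fun y hy => ne_of_lt hy) hd
  have hright : HasDerivWithinAt f (g x) (Ici x) x :=
    hasDerivWithinAt_Ici_of_tendsto_deriv (fun y hy => hy.differentiableAt.differentiableWithinAt)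
      hf.continuousWithinAt hr
      ((hg.tendsto.mono_left nhdsWithin_le_nhds).congr' (hr.mono fun y hy => hy.deriv.symm))
  have hleft : HasDerivWithinAt f (g x) (Iic x) x :=
    hasDerivWithinAt_Iic_of_tendsto_deriv (fun y hy => hy.differentiableAt.differentiableWithinAt)
      hf.continuousWithinAt hl
      ((hg.tendsto.mono_left nhdsWithin_le_nhds).congr' (hl.mono fun y hy => hy.deriv.symm))
  simpa using hleft.union hright

section Smoothness

variable {t : ℕ → ℝ}

theorem bspline_succ_succ (q i : ℕ) :
    bspline t (q + 2) i = fun y =>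
      (y - t i) / (t (i + q + 2) - t i) * bspline t (q + 1) i y +
        (t (i + q + 3) - y) / (t (i + q + 3) - t (i + 1)) * bspline t (q + 1) (i + 1) y := by
  funext y
  rw [bspline, show i + (q + 1) + 1 = i + q + 2 by omega, show i + (q + 1) + 2 = i + q + 3 by omega]

theorem bspline_one_eq_max_min (ht : StrictMono t) (i : ℕ) (x : ℝ) :
    bspline t 1 i x = max 0 (min ((x - t i) / (t (i + 1) - t i))
      ((t (i + 2) - x) / (t (i + 2) - t (i + 1)))) := by
  have d₁ : 0 < t (i + 1) - t i := sub_pos.2 (ht (by omega))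
  have d₂ : 0 < t (i + 2) - t (i + 1) := sub_pos.2 (ht (by omega))
  simp only [bspline, add_zero, show i + 1 + 1 = i + 2 by omega]
  have ha := div_mul_cancel₀ (x - t i) d₁.ne'
  have hb := div_mul_cancel₀ (t (i + 2) - x) d₂.ne'
  generalize (x - t i) / (t (i + 1) - t i) = a at ha ⊢
  generalize (t (i + 2) - x) / (t (i + 2) - t (i + 1)) = b at hb ⊢
  rw [max_def, min_def]
  split_ifs <;> (try simp only [not_and_or, not_le, not_lt] at *) <;> casesm* _ ∧ _, _ ∨ _ <;>
    nlinarith [mul_pos d₁ d₂]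

theorem continuous_bspline_succ (ht : StrictMono t) (q i : ℕ) :
    Continuous (bspline t (q + 1) i) := by
  induction q generalizing i with
  | zero =>
    simp only [funext (bspline_one_eq_max_min ht i)]
    fun_prop
  | succ q ih =>
    have := ih i
    have := ih (i + 1)
    rw [bspline_succ_succ]
    fun_prop

theorem bspline_zero_eventuallyEq (i : ℕ) {x : ℝ} (h₀ : x ≠ t i) (h₁ : x ≠ t (i + 1)) :
    bspline t 0 i =ᶠ[𝓝 x] fun _ => bspline t 0 i x := by
  rcases h₀.lt_or_gt with h₀ | h₀
  · filter_upwards [Iio_mem_nhds h₀] with y (hy : y < t i)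
    simp [bspline, not_le.2 hy, not_le.2 h₀]
  rcases h₁.lt_or_gt with h₁ | h₁
  · filter_upwards [Ioo_mem_nhds h₀ h₁] with y hy
    simp [bspline, hy.1.le, hy.2, h₀.le, h₁]
  · filter_upwards [Ioi_mem_nhds h₁] with y (hy : t (i + 1) < y)
    simp [bspline, not_lt.2 hy.le, not_lt.2 h₁.le]

/-- `bsplineDeriv t q i` is the derivative of `bspline t (q + 1) i`. -/
noncomputable def bsplineDeriv (t : ℕ → ℝ) (q i : ℕ) (x : ℝ) : ℝ :=
  (q + 1) * (bspline t q i x / (t (i + q + 1) - t i) -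
    bspline t q (i + 1) x / (t (i + q + 2) - t (i + 1)))

/-- The right-hand side is what the product rule gives for the Cox–de Boor recursion of
`bspline t (q + 2) i`. -/
theorem bsplineDeriv_succ (ht : Function.Injective t) (q i : ℕ) (x : ℝ) :
    bsplineDeriv t (q + 1) i x =
      bspline t (q + 1) i x / (t (i + q + 2) - t i) -
        bspline t (q + 1) (i + 1) x / (t (i + q + 3) - t (i + 1)) +
      ((x - t i) / (t (i + q + 2) - t i) * bsplineDeriv t q i x +
        (t (i + q + 3) - x) / (t (i + q + 3) - t (i + 1)) * bsplineDeriv t q (i + 1) x) := by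
  have d₁ : t (i + q + 2) - t i ≠ 0 := sub_ne_zero.2 (ht.ne (by omega))
  have d₂ : t (i + q + 3) - t (i + 1) ≠ 0 := sub_ne_zero.2 (ht.ne (by omega))
  simp only [bsplineDeriv, bspline, show i + 1 + q + 1 = i + q + 2 by omega,
    show i + 1 + q + 2 = i + q + 3 by omega, show i + (q + 1) + 1 = i + q + 2 by omega,
    show i + (q + 1) + 2 = i + q + 3 by omega]
  push_cast
  field_simp
  ring

theorem hasDerivAt_bspline_succ_of_forall_ne (ht : Function.Injective t) (q i : ℕ) {x : ℝ}
    (hx : ∀ j ∈ Finset.Icc i (i + q + 2), x ≠ t j) :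
    HasDerivAt (bspline t (q + 1) i) (bsplineDeriv t q i x) x := by
  induction q generalizing i with
  | zero =>
    have hx' : ∀ j, i ≤ j → j ≤ i + 2 → x ≠ t j := fun j hj hj' => hx j (by simp; omega)
    have hlin := ((((hasDerivAt_id x).sub_const (t i)).div_const (t (i + 1) - t i)).mul_const
      (bspline t 0 i x)).add ((((hasDerivAt_id x).const_sub (t (i + 2))).div_const
        (t (i + 2) - t (i + 1))).mul_const (bspline t 0 (i + 1) x))
    refine (hlin.congr_deriv (by simp only [bsplineDeriv]; ring)).congr_of_eventuallyEq ?_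
    filter_upwards
      [bspline_zero_eventuallyEq i (hx' i le_rfl (by omega)) (hx' (i + 1) (by omega) (by omega)),
        bspline_zero_eventuallyEq (i + 1) (hx' (i + 1) (by omega) (by omega))
          (hx' (i + 2) (by omega) (by omega))] with y h₀ h₁
    rw [bspline.eq_2, h₀, h₁]
    rfl
  | succ q ih =>
    have h₀ := ih i fun j hj => hx j (by simp at hj ⊢; omega)
    have h₁ := ih (i + 1) fun j hj => hx j (by simp at hj ⊢; omega)
    have hrec := ((((hasDerivAt_id x).sub_const (t i)).div_const (t (i + q + 2) - t i)).mul h₀).add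
      ((((hasDerivAt_id x).const_sub (t (i + q + 3))).div_const (t (i + q + 3) - t (i + 1))).mul h₁)
    rw [bspline_succ_succ]
    exact hrec.congr_deriv (by rw [bsplineDeriv_succ ht]; simp only [id]; ring)

theorem hasDerivAt_bspline (ht : StrictMono t) (q i : ℕ) (x : ℝ) :
    HasDerivAt (bspline t (q + 2) i) (bsplineDeriv t (q + 1) i x) x := by
  have := continuous_bspline_succ ht q i
  have := continuous_bspline_succ ht q (i + 1)
  refine hasDerivAt_of_eventually_hasDerivAt ?_
    (continuous_bspline_succ ht (q + 1) i).continuousAt (by unfold bsplineDeriv; fun_prop)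
  have hoff : ∀ j, ∀ᶠ y in 𝓝[≠] x, y ≠ t j := fun j => by
    rcases eq_or_ne x (t j) with rfl | h
    · exact self_mem_nhdsWithin
    · exact eventually_ne_nhdsWithin h
  filter_upwards [(Finset.eventually_all _).2 fun j _ => hoff j] with y hy
  exact hasDerivAt_bspline_succ_of_forall_ne ht.injective (q + 1) i hy

theorem contDiff_bspline_s3 (ht : StrictMono t) (q i : ℕ) :
    ContDiff ℝ q (bspline t (q + 1) i) := by
  induction q generalizing i with
  | zero => exact contDiff_zero.2 (continuous_bspline_succ ht 0 i)
  | succ q ih =>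
    rw [Nat.cast_succ, contDiff_succ_iff_deriv]
    refine ⟨fun x => (hasDerivAt_bspline ht q i x).differentiableAt, by simp, ?_⟩
    rw [show deriv (bspline t (q + 2) i) = bsplineDeriv t (q + 1) i from
      funext fun x => (hasDerivAt_bspline ht q i x).deriv]
    have := ih i
    have := ih (i + 1)
    unfold bsplineDeriv
    fun_prop

end Smoothness

section Flat

variable {𝕜 F : Type*} [NontriviallyNormedField 𝕜] [NormedAddCommGroup F] [NormedSpace 𝕜 F]

theorem ContDiff.iteratedDeriv_eq_zero_of_mem_closure {f : 𝕜 → F} {U : Set 𝕜} {k : ℕ} {x : 𝕜}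
    (hf : ContDiff 𝕜 k f) (hU : IsOpen U) (hfU : EqOn f 0 U) (hx : x ∈ closure U) :
    iteratedDeriv k f x = 0 := by
  have hzero : EqOn (iteratedDeriv k f) 0 U := fun y hy => by
    rw [hfU.iteratedDeriv_of_isOpen hU k hy, Pi.zero_def, iteratedDeriv_const]
    simp
  exact hzero.closure (hf.continuous_iteratedDeriv' k) continuous_const hx

theorem iteratedDeriv_eq_of_eventuallyEq_add {f g h : 𝕜 → F} {U : Set 𝕜} {k : ℕ} {x : 𝕜}
    (hfgh : f =ᶠ[𝓝 x] fun y => g y + h y) (hg : ContDiff 𝕜 k g) (hh : ContDiff 𝕜 k h)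
    (hU : IsOpen U) (hhU : EqOn h 0 U) (hx : x ∈ closure U) :
    iteratedDeriv k f x = iteratedDeriv k g x := by
  rw [hfgh.iteratedDeriv_eq, iteratedDeriv_fun_add hg.contDiffAt hh.contDiffAt,
    hh.iteratedDeriv_eq_zero_of_mem_closure hU hhU hx, add_zero]

end Flat

section Seam

variable {t : ℕ → ℝ} {p n : ℕ} (c : ℕ → ℝ)

theorem sum_range_bspline_eq_sum_range_of_lt (ht : Monotone t) {b : ℕ} (hb : b ≤ n) {s : ℝ}
    (hs : s < t b) : ∑ i ∈ range n, bspline t p i s * c i = ∑ i ∈ range b, bspline t p i s * c i :=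
  (sum_subset (range_subset_range.2 hb) fun i _ hi => by
    rw [bspline_eq_zero_of_lt_knot ht p (hs.trans_le (ht (by simpa using hi))), zero_mul]).symm

theorem sum_range_bspline_eq_sum_Ico_of_le (ht : Monotone t) {a : ℕ} {s : ℝ} (hs : t (a + p) ≤ s) :
    ∑ i ∈ range n, bspline t p i s * c i = ∑ i ∈ Ico a n, bspline t p i s * c i :=
  (sum_subset (fun i hi => by simp at hi ⊢; omega) fun i hi hi' => by
    rw [bspline_eq_zero_of_knot_le ht p ((ht (by simp at hi hi'; omega)).trans hs), zero_mul]).symm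

theorem knot_eq_add_of_shift (hn : p ≤ n) {T : ℝ} (hT : ∀ j ≤ 2 * p, t (j + (n - p)) = t j + T) :
    t n = t p + T := by
  simpa [Nat.add_sub_cancel' hn] using hT p (by omega)

variable (ht : StrictMono t) (hn : p < n) {T : ℝ}
  (hT : ∀ j ≤ 2 * p, t (j + (n - p)) = t j + T)
include ht hn

theorem sum_bspline_eventuallyEq_left :
    (fun s => ∑ i ∈ range n, bspline t p i s * c i) =ᶠ[𝓝 (t p)]
      fun s => ∑ i ∈ range p, bspline t p i s * c i + bspline t p p s * c p := by
  filter_upwards [Iio_mem_nhds (ht p.lt_succ_self)] with s hs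
  rw [sum_range_bspline_eq_sum_range_of_lt c ht.monotone hn hs, sum_range_succ]

include hT

theorem sum_bspline_eventuallyEq_right :
    (fun s => ∑ i ∈ range n, bspline t p i s * c i) =ᶠ[𝓝 (t n)]
      fun s => ∑ r ∈ range p, bspline t p r (s - T) * c (n - p + r) +
        bspline t p (n - p - 1) s * c (n - p - 1) := by
  filter_upwards [Ioi_mem_nhds (ht (show n - 1 < n by omega))] with s (hs : t (n - 1) < s)
  rw [sum_range_bspline_eq_sum_Ico_of_le c ht.monotone (a := n - p - 1)
      (by rw [show n - p - 1 + p = n - 1 by omega]; exact hs.le),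
    sum_Ico_eq_sum_range, show n - (n - p - 1) = p + 1 by omega, sum_range_succ', add_zero]
  congr 1
  refine sum_congr rfl fun r hr => ?_
  rw [show n - p - 1 + (r + 1) = r + (n - p) by omega,
    bspline_shift p r (fun j _ hj => hT j (by simp at hr; omega)), add_comm r]

theorem sum_bspline_knot_add_eq (hp : 1 ≤ p) {L : ℝ} (hc : ∀ i < p, c i + L = c (n - p + i)) :
    ∑ i ∈ range n, bspline t p i (t p) * c i + L = ∑ i ∈ range n, bspline t p i (t n) * c i := by
  obtain ⟨q, rfl⟩ : ∃ q, p = q + 1 := ⟨p - 1, by omega⟩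
  have hlast : bspline t (q + 1) (n - (q + 1) - 1) (t n) = 0 :=
    bspline_eq_zero_of_knot_le ht.monotone _ (le_of_eq (congrArg t (by omega)))
  have hone : ∑ r ∈ range (q + 1), bspline t (q + 1) r (t (q + 1)) = 1 := by
    have := sum_bspline_eq_one ht (q + 1) 0 (by rw [zero_add])
      (by rw [zero_add]; exact ht (by omega))
    simpa [sum_range_succ _ (q + 1), bspline_succ_eq_zero_of_le_knot ht q le_rfl] using this
  have hleft := (sum_bspline_eventuallyEq_left c ht hn).eq_of_nhds
  have hright := (sum_bspline_eventuallyEq_right c ht hn hT).eq_of_nhds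
  rw [hleft, hright, hlast, knot_eq_add_of_shift hn.le hT, add_sub_cancel_right,
    bspline_succ_eq_zero_of_le_knot ht q le_rfl, zero_mul, zero_mul, add_zero, add_zero]
  calc ∑ r ∈ range (q + 1), bspline t (q + 1) r (t (q + 1)) * c r + L
      = ∑ r ∈ range (q + 1), bspline t (q + 1) r (t (q + 1)) * (c r + L) := by
        simp only [mul_add, sum_add_distrib, ← sum_mul, hone, one_mul]
    _ = _ := sum_congr rfl fun r hr => by rw [hc r (by simpa using hr)]

theorem iteratedDeriv_sum_bspline_knot_eq (hc : ∀ i < p, c i = c (n - p + i)) {k : ℕ}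
    (hk : k < p) :
    iteratedDeriv k (fun s => ∑ i ∈ range n, bspline t p i s * c i) (t p) =
      iteratedDeriv k (fun s => ∑ i ∈ range n, bspline t p i s * c i) (t n) := by
  obtain ⟨q, rfl⟩ : ∃ q, p = q + 1 := ⟨p - 1, by omega⟩
  have hB : ∀ i (a : ℝ), ContDiff ℝ k fun s => bspline t (q + 1) i s * a := fun i a =>
    ((contDiff_bspline_s3 ht q i).of_le (by exact_mod_cast (by omega : k ≤ q))).mul contDiff_const
  set g := fun s => ∑ r ∈ range (q + 1), bspline t (q + 1) r s * c r
  have hg : ContDiff ℝ k g := ContDiff.sum fun r _ => hB r (c r)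
  have hright : (fun s => ∑ i ∈ range n, bspline t (q + 1) i s * c i) =ᶠ[𝓝 (t n)]
      fun s => g (s - T) + bspline t (q + 1) (n - (q + 1) - 1) s * c (n - (q + 1) - 1) := by
    filter_upwards [sum_bspline_eventuallyEq_right c ht hn hT] with s hs
    rw [hs]
    congr 1
    exact sum_congr rfl fun r hr => by rw [hc r (by simpa using hr)]
  have hfirst : EqOn (fun s => bspline t (q + 1) (q + 1) s * c (q + 1)) 0 (Iio (t (q + 1))) :=
    fun s (hs : s < t (q + 1)) => by
      simp only [Pi.zero_apply, bspline_succ_eq_zero_of_le_knot ht q hs.le, zero_mul]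
  have hlast : EqOn (fun s => bspline t (q + 1) (n - (q + 1) - 1) s * c (n - (q + 1) - 1)) 0
      (Ioi (t n)) := fun s (hs : t n < s) => by
    simp only [Pi.zero_apply]
    rw [bspline_eq_zero_of_knot_le ht.monotone _ (le_of_eq_of_le
      (congrArg t (by omega)) hs.le), zero_mul]
  rw [iteratedDeriv_eq_of_eventuallyEq_add (sum_bspline_eventuallyEq_left c ht hn) hg (hB _ _)
      isOpen_Iio hfirst (closure_Iio (t (q + 1)) ▸ self_mem_Iic),
    iteratedDeriv_eq_of_eventuallyEq_add hright (hg.comp (contDiff_id.sub contDiff_const)) (hB _ _)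
      isOpen_Ioi hlast (closure_Ioi (t n) ▸ self_mem_Ici),
    iteratedDeriv_comp_sub_const]
  simp only [knot_eq_add_of_shift hn.le hT, add_sub_cancel_right, g]

end Seam

section Extension

variable {t : ℕ → ℝ} {N : ℕ}

noncomputable def extendKnots (t : ℕ → ℝ) (N j : ℕ) : ℝ := t (min j N) + (j - N : ℕ)

theorem extendKnots_of_le {j : ℕ} (hj : j ≤ N) : extendKnots t N j = t j := by
  simp [extendKnots, hj, Nat.sub_eq_zero_of_le hj]

theorem strictMono_extendKnots (ht : ∀ i < N, t i < t (i + 1)) : StrictMono (extendKnots t N) := by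
  refine strictMono_nat_of_lt_succ fun j => ?_
  rcases lt_or_ge j N with h | h
  · rw [extendKnots_of_le h.le, extendKnots_of_le h]
    exact ht j h
  · simp only [extendKnots, min_eq_right h, min_eq_right (h.trans j.le_succ),
      Nat.sub_add_comm h, Nat.cast_succ]
    linarith

end Extension

theorem add_eq_of_forall_sub_eq {t : ℕ → ℝ} {m N : ℕ}
    (h : ∀ i < N, t (i + 1) - t i = t (i + m + 1) - t (i + m)) {j : ℕ} (hj : j ≤ N) :
    t (j + m) = t j + (t m - t 0) := by
  induction j with
  | zero => simp
  | succ j ih =>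
    have := h j (by omega)
    rw [show j + 1 + m = j + m + 1 by omega]
    linarith [ih (by omega)]

/-- Theorem 1 of the paper: a plane B-spline curve whose control points satisfy the
periodicity conditions yields a periodic curve unit. The control point `p_i` has
coordinates `(x i, y i)`, and `(X, Y)` is the associated plane B-spline curve. -/
theorem periodic_bspline_curve (p n : ℕ) (hp : 1 ≤ p) (hn : p < n)
    (t : ℕ → ℝ) (hmono : ∀ i < n + p, t i < t (i + 1))
    (hequi : ∀ i < 2 * p, t (i + 1) - t i = t (i + (n - p) + 1) - t (i + (n - p)))
    (L : ℝ) (x y : ℕ → ℝ)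
    (hx : ∀ i < p, x i + L = x (n - p + i))
    (hy : ∀ i < p, y i = y (n - p + i))
    (X Y : ℝ → ℝ)
    (hX : X = fun s => ∑ i ∈ Finset.range n, bspline t p i s * x i)
    (hY : Y = fun s => ∑ i ∈ Finset.range n, bspline t p i s * y i) :
    X (t p) + L = X (t n) ∧
      ∀ k < p, iteratedDeriv k Y (t p) = iteratedDeriv k Y (t n) := by
  set t' := extendKnots t (n + p)
  have ht' : StrictMono t' := strictMono_extendKnots hmono
  have hknot : ∀ j ≤ n + p, t' j = t j := fun j hj => extendKnots_of_le hj
  have hT : ∀ j ≤ 2 * p, t' (j + (n - p)) = t' j + (t (n - p) - t 0) := fun j hj => by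
    rw [hknot _ (by omega), hknot _ (by omega)]
    exact add_eq_of_forall_sub_eq hequi hj
  have hsum : ∀ (c : ℕ → ℝ) s, ∑ i ∈ Finset.range n, bspline t p i s * c i =
      ∑ i ∈ Finset.range n, bspline t' p i s * c i := fun c s =>
    Finset.sum_congr rfl fun i hi => by
      rw [bspline_congr p i fun j _ hj => (hknot j (by simp at hi; omega)).symm]
  subst hX hY
  simp only [hsum, ← hknot p (by omega), ← hknot n le_self_add]
  exact ⟨sum_bspline_knot_add_eq x ht' hn hT hp hx,
    fun k hk => iteratedDeriv_sum_bspline_knot_eq y ht' hn hT hy hk⟩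
end

section
/- Let p ≥ 1 and n ≥ p, and let the knots be uniform: t_i := a + i·h for i = 0, …, n+p, with a ∈ ℝ and h > 0. Then Σ_{j=n−p}^{n−1} j·B_j^p(t_n) = (p−1)/2 + (n − p). -/
/-!
Write points as `x = a + u h`. On uniform knots the Cox–de Boor recursion reads
`(q+1) B_j^{q+1} = (u - j) B_j^q + (j + q + 2 - u) B_{j+1}^q`, and for `u ∈ [n, n+1)` only
`B_{n-q}^q, …, B_n^q` can be nonzero. Shifting the index in the second term turns a weighted
sum `∑ f(j) B_j^{q+1}` into a weighted sum against `B^q`; with `f = 1` this gives the partition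
of unity and with `f(j) = j + (q+2)/2` the Greville identity `∑ (j + (q+1)/2) B_j^q = u` for
`q ≥ 1`. At the knot `u = n` the spline `B_n^p` vanishes, and subtracting `(p+1)/2` times the
partition of unity gives the theorem.
-/

open Finset

theorem bspline_zero_eq_ite {t : ℕ → ℝ} (ht : StrictMono t) {n : ℕ} {x : ℝ}
    (hx : x ∈ Set.Ico (t n) (t (n + 1))) (j : ℕ) :
    bspline t 0 j x = if j = n then 1 else 0 := by
  have hjn : (t j ≤ x ∧ x < t (j + 1)) ↔ j = n := by
    constructor
    · rintro ⟨hj₁, hj₂⟩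
      have : j < n + 1 := ht.lt_iff_lt.mp (hj₁.trans_lt hx.2)
      have : n < j + 1 := ht.lt_iff_lt.mp (hx.1.trans_lt hj₂)
      omega
    · rintro rfl
      exact hx
  simp only [bspline, hjn]

section UniformKnots

variable {a h : ℝ} {t : ℕ → ℝ}

theorem strictMono_of_uniform (hh : 0 < h) (ht : ∀ i, t i = a + (i : ℝ) * h) : StrictMono t :=
  fun i j hij => by
    rw [ht, ht]
    gcongr

theorem bspline_succ_uniform (hh : h ≠ 0) (ht : ∀ i, t i = a + (i : ℝ) * h)
    (q j : ℕ) (u : ℝ) :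
    bspline t (q + 1) j (a + u * h) =
      (u - j) / (q + 1) * bspline t q j (a + u * h) +
        (j + q + 2 - u) / (q + 1) * bspline t q (j + 1) (a + u * h) := by
  rw [bspline, ht, ht, ht, ht]
  push_cast
  congr 2
  · rw [show a + u * h - (a + j * h) = (u - j) * h by ring,
      show a + (j + q + 1) * h - (a + j * h) = (q + 1) * h by ring, mul_div_mul_right _ _ hh]
  · rw [show a + (j + q + 2) * h - (a + u * h) = (j + q + 2 - u) * h by ring,
      show a + (j + q + 2) * h - (a + (j + 1) * h) = (q + 1) * h by ring,
      mul_div_mul_right _ _ hh]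

variable {n : ℕ} {u : ℝ}

theorem bspline_zero_uniform_eq_ite (hh : 0 < h) (ht : ∀ i, t i = a + (i : ℝ) * h)
    (hu : u ∈ Set.Ico (n : ℝ) (n + 1)) (j : ℕ) :
    bspline t 0 j (a + u * h) = if j = n then 1 else 0 := by
  refine bspline_zero_eq_ite (strictMono_of_uniform hh ht) ?_ j
  rw [ht, ht]
  push_cast
  constructor <;> nlinarith [hu.1, hu.2]

theorem bspline_uniform_eq_zero_of_add_lt (hh : 0 < h) (ht : ∀ i, t i = a + (i : ℝ) * h)
    (hu : u ∈ Set.Ico (n : ℝ) (n + 1)) {q j : ℕ} (hjq : j + q < n) :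
    bspline t q j (a + u * h) = 0 := by
  induction q generalizing j with
  | zero => rw [bspline_zero_uniform_eq_ite hh ht hu, if_neg (by omega)]
  | succ q ih => rw [bspline_succ_uniform hh.ne' ht, ih (by omega), ih (by omega), mul_zero,
      mul_zero, add_zero]

theorem bspline_uniform_eq_zero_of_lt (hh : 0 < h) (ht : ∀ i, t i = a + (i : ℝ) * h)
    (hu : u ∈ Set.Ico (n : ℝ) (n + 1)) {q j : ℕ} (hnj : n < j) :
    bspline t q j (a + u * h) = 0 := by
  induction q generalizing j with
  | zero => rw [bspline_zero_uniform_eq_ite hh ht hu, if_neg (by omega)]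
  | succ q ih => rw [bspline_succ_uniform hh.ne' ht, ih hnj, ih (by omega), mul_zero,
      mul_zero, add_zero]

theorem bspline_uniform_knot_self (hh : 0 < h) (ht : ∀ i, t i = a + (i : ℝ) * h)
    {q : ℕ} (hq : 1 ≤ q) (j : ℕ) : bspline t q j (t j) = 0 := by
  obtain ⟨q, rfl⟩ := Nat.exists_eq_add_of_le' hq
  have hj : (j : ℝ) ∈ Set.Ico (j : ℝ) (j + 1) := ⟨le_rfl, by linarith⟩
  rw [ht, bspline_succ_uniform hh.ne' ht,
    bspline_uniform_eq_zero_of_lt hh ht hj (j := j + 1) (by omega)]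
  simp

/-- The boundary terms of the index shift are multiples of `B_0^q` and `B_{n+1}^q`,
which vanish. -/
theorem sum_mul_bspline_succ_uniform (hh : 0 < h) (ht : ∀ i, t i = a + (i : ℝ) * h)
    (hu : u ∈ Set.Ico (n : ℝ) (n + 1)) {q : ℕ} (hqn : q < n) (f : ℝ → ℝ) :
    ∑ j ∈ range (n + 1), f j * bspline t (q + 1) j (a + u * h) =
      ∑ j ∈ range (n + 1),
        ((u - j) * f j + (j + q + 1 - u) * f (j - 1)) / (q + 1) * bspline t q j (a + u * h) := by
  set g : ℕ → ℝ := fun k => (k + q + 1 - u) * f (k - 1) / (q + 1) * bspline t q k (a + u * h)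
  have hshift : ∑ j ∈ range (n + 1), g (j + 1) = ∑ j ∈ range (n + 1), g j := by
    have h₀ : g 0 = 0 := by
      simp [g, bspline_uniform_eq_zero_of_add_lt hh ht hu (q := q) (j := 0) (by omega)]
    have hₙ : g (n + 1) = 0 := by
      simp [g, bspline_uniform_eq_zero_of_lt hh ht hu (q := q) (j := n + 1) (by omega)]
    have := (sum_range_succ' g (n + 1)).symm.trans (sum_range_succ g (n + 1))
    rwa [h₀, hₙ, add_zero, add_zero] at this
  calc ∑ j ∈ range (n + 1), f j * bspline t (q + 1) j (a + u * h)
      = ∑ j ∈ range (n + 1), (u - j) * f j / (q + 1) * bspline t q j (a + u * h) +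
          ∑ j ∈ range (n + 1), g (j + 1) := by
        rw [← sum_add_distrib]
        refine sum_congr rfl fun j _ => ?_
        rw [bspline_succ_uniform hh.ne' ht]
        simp only [g, Nat.cast_succ, add_sub_cancel_right]
        ring
    _ = _ := by
        rw [hshift, ← sum_add_distrib]
        refine sum_congr rfl fun j _ => ?_
        simp only [g]
        ring

theorem sum_bspline_uniform (hh : 0 < h) (ht : ∀ i, t i = a + (i : ℝ) * h)
    (hu : u ∈ Set.Ico (n : ℝ) (n + 1)) {q : ℕ} (hqn : q ≤ n) :
    ∑ j ∈ range (n + 1), bspline t q j (a + u * h) = 1 := by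
  induction q with
  | zero => simp [bspline_zero_uniform_eq_ite hh ht hu]
  | succ q ih =>
    have := sum_mul_bspline_succ_uniform hh ht hu hqn (fun _ => 1)
    simp only [one_mul, mul_one] at this
    rw [this]
    refine (sum_congr rfl fun j _ => ?_).trans (ih (by omega))
    rw [show u - j + (j + q + 1 - u) = (q : ℝ) + 1 by ring, div_self (by positivity), one_mul]

theorem sum_greville_mul_bspline_succ_uniform (hh : 0 < h) (ht : ∀ i, t i = a + (i : ℝ) * h)
    (hu : u ∈ Set.Ico (n : ℝ) (n + 1)) {q : ℕ} (hqn : q < n) :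
    ∑ j ∈ range (n + 1), ((j : ℝ) + (q + 2) / 2) * bspline t (q + 1) j (a + u * h) =
      q / (q + 1) * ∑ j ∈ range (n + 1), ((j : ℝ) + (q + 1) / 2) * bspline t q j (a + u * h) +
        u / (q + 1) := by
  have hunity : u / (q + 1) = ∑ j ∈ range (n + 1), u / (q + 1) * bspline t q j (a + u * h) := by
    rw [← mul_sum, sum_bspline_uniform hh ht hu hqn.le, mul_one]
  rw [sum_mul_bspline_succ_uniform hh ht hu hqn (fun y => y + (q + 2) / 2), mul_sum, hunity,
    ← sum_add_distrib]
  refine sum_congr rfl fun j _ => ?_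
  field_simp
  ring

theorem sum_greville_mul_bspline_uniform (hh : 0 < h) (ht : ∀ i, t i = a + (i : ℝ) * h)
    (hu : u ∈ Set.Ico (n : ℝ) (n + 1)) {q : ℕ} (hq : 1 ≤ q) (hqn : q ≤ n) :
    ∑ j ∈ range (n + 1), ((j : ℝ) + (q + 1) / 2) * bspline t q j (a + u * h) = u := by
  induction q, hq using Nat.le_induction with
  | base =>
    have := sum_greville_mul_bspline_succ_uniform hh ht hu hqn
    simpa using this
  | succ q hq ih =>
    rw [Nat.cast_succ, show ((q : ℝ) + 1 + 1) / 2 = (q + 2) / 2 by ring,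
      sum_greville_mul_bspline_succ_uniform hh ht hu hqn, ih (by omega)]
    field_simp

end UniformKnots

/-- For uniform knots, `Σ_{j=n-p}^{n-1} j·B_j^p(t_n) = (p-1)/2 + (n-p)`. -/
theorem bspline_Cp_shifted (p n : ℕ) (hp : 1 ≤ p) (hn : p ≤ n)
    (a h : ℝ) (hh : 0 < h) (t : ℕ → ℝ) (ht : ∀ i, t i = a + (i : ℝ) * h) :
    ∑ j ∈ Finset.Icc (n - p) (n - 1), (j : ℝ) * bspline t p j (t n) =
      ((p : ℝ) - 1) / 2 + ((n : ℝ) - p) := by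
  have hknot : (n : ℝ) ∈ Set.Ico (n : ℝ) (n + 1) := ⟨le_rfl, by linarith⟩
  have hsupport : ∑ j ∈ Finset.Icc (n - p) (n - 1), (j : ℝ) * bspline t p j (t n) =
      ∑ j ∈ range (n + 1), (j : ℝ) * bspline t p j (t n) := by
    refine sum_subset (fun j hj => ?_) fun j hj hj' => ?_
    · simp only [mem_Icc, mem_range] at hj ⊢
      omega
    · simp only [mem_Icc, mem_range, not_and_or, not_le] at hj hj'
      obtain hjp | rfl : j + p < n ∨ j = n := by omega
      · rw [ht n, bspline_uniform_eq_zero_of_add_lt hh ht hknot hjp, mul_zero]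
      · rw [bspline_uniform_knot_self hh ht hp, mul_zero]
  have hgreville := sum_greville_mul_bspline_uniform hh ht hknot hp hn
  simp only [add_mul, sum_add_distrib, ← mul_sum, sum_bspline_uniform hh ht hknot hn] at hgreville
  rw [hsupport, ht n]
  linarith
end

section
/- Let p ≥ 1 and n ≥ p + 1, and let the knots be uniform: t_i := a + i·h for i = 0, …, n+p, with a ∈ ℝ and h > 0. Then Σ_{i=1}^{p} i·B_i^p(t_{p+1}) = (p+1)/2. -/
open Finset

/-- `cardinalBSpline q d` is the value at the integer `d` of the cardinal B-spline of degree `q`,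
the B-spline with knots `0, 1, …, q + 1`. -/
noncomputable def cardinalBSpline : ℕ → ℤ → ℝ
  | 0, d => if d = 0 then 1 else 0
  | q + 1, d =>
      d / (q + 1) * cardinalBSpline q d + (q + 2 - d) / (q + 1) * cardinalBSpline q (d - 1)

theorem cardinalBSpline_eq_zero {q : ℕ} {d : ℤ} (hd : d < 0 ∨ q < d) :
    cardinalBSpline q d = 0 := by
  induction q generalizing d with
  | zero => simp only [cardinalBSpline, ite_eq_right_iff]; omega
  | succ q ih =>
    push_cast at hd
    rw [cardinalBSpline, ih (by omega), ih (by omega), mul_zero, mul_zero, add_zero]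

theorem cardinalBSpline_zero_right {q : ℕ} (hq : 1 ≤ q) : cardinalBSpline q 0 = 0 := by
  obtain ⟨q, rfl⟩ := Nat.exists_eq_add_of_le' hq
  rw [cardinalBSpline, cardinalBSpline_eq_zero (d := 0 - 1) (by omega)]
  simp

theorem sum_range_mul_cardinalBSpline_succ (f : ℕ → ℝ) (q : ℕ) :
    ∑ d ∈ range (q + 2), f d * cardinalBSpline (q + 1) d =
      ∑ d ∈ range (q + 1),
        (d * f d + (q + 1 - d) * f (d + 1)) / (q + 1) * cardinalBSpline q d := by
  simp only [cardinalBSpline, mul_add, sum_add_distrib]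
  rw [sum_range_succ, cardinalBSpline_eq_zero (d := (q + 1 : ℕ)) (by omega),
    sum_range_succ' _ (q + 1), cardinalBSpline_eq_zero (d := ((0 : ℕ) : ℤ) - 1) (by omega)]
  simp only [mul_zero, add_zero, ← sum_add_distrib]
  refine sum_congr rfl fun d _ => ?_
  push_cast
  ring_nf

theorem sum_range_cardinalBSpline (q : ℕ) : ∑ d ∈ range (q + 1), cardinalBSpline q d = 1 := by
  induction q with
  | zero => simp [cardinalBSpline]
  | succ q ih =>
    have hweight (d : ℕ) : ((d : ℝ) * 1 + (q + 1 - d) * 1) / (q + 1) = 1 := by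
      rw [div_eq_one_iff_eq (by positivity)]
      ring
    simpa only [one_mul, hweight, ih] using sum_range_mul_cardinalBSpline_succ (fun _ => 1) q

theorem sum_range_mul_cardinalBSpline {q : ℕ} (hq : 1 ≤ q) :
    ∑ d ∈ range (q + 1), (d : ℝ) * cardinalBSpline q d = (q + 1) / 2 := by
  have step (m : ℕ) : ∑ d ∈ range (m + 2), (d : ℝ) * cardinalBSpline (m + 1) d =
      m / (m + 1) * ∑ d ∈ range (m + 1), (d : ℝ) * cardinalBSpline m d + 1 := by
    have hweight (d : ℕ) :
        ((d : ℝ) * d + (m + 1 - d) * ((d + 1 : ℕ) : ℝ)) / (m + 1) * cardinalBSpline m d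
          = m / (m + 1) * (d * cardinalBSpline m d) + cardinalBSpline m d := by
      push_cast
      field_simp
      ring
    simp only [sum_range_mul_cardinalBSpline_succ, hweight, sum_add_distrib, ← mul_sum,
      sum_range_cardinalBSpline]
  obtain ⟨q, rfl⟩ := Nat.exists_eq_add_of_le' hq
  induction q with
  | zero => simp [step]
  | succ q ih =>
    rw [step, ih (by omega)]
    push_cast
    field_simp
    ring

theorem bspline_uniform_knots {a h : ℝ} (hh : 0 < h) {t : ℕ → ℝ}
    (ht : ∀ i, t i = a + i * h) (q i k : ℕ) :
    bspline t q i (t k) = cardinalBSpline q (k - i) := by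
  induction q generalizing i with
  | zero =>
    have hmono : StrictMono t := fun i j hij => by
      rw [ht, ht]
      gcongr
    simp only [bspline, cardinalBSpline, hmono.le_iff_le, hmono.lt_iff_lt]
    congr 1
    apply propext
    omega
  | succ q ih =>
    have hdiff (m n : ℕ) : t m - t n = ((m : ℝ) - n) * h := by
      rw [ht, ht]
      ring
    rw [bspline, ih, ih]
    simp only [cardinalBSpline, hdiff, mul_div_mul_right _ _ hh.ne']
    push_cast
    ring_nf

theorem bspline_T1_general (p : ℕ) (hp : 1 ≤ p)
    (a h : ℝ) (hh : 0 < h) (t : ℕ → ℝ) (ht : ∀ i, t i = a + (i : ℝ) * h) :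
    ∑ i ∈ Finset.Icc 1 p, (i : ℝ) * bspline t p i (t (p + 1)) = ((p : ℝ) + 1) / 2 := by
  calc ∑ i ∈ Icc 1 p, (i : ℝ) * bspline t p i (t (p + 1))
      = ∑ d ∈ Icc 1 p, ((p : ℝ) + 1 - d) * cardinalBSpline p d := by
        refine sum_nbij' (fun i => p + 1 - i) (fun d => p + 1 - d) ?_ ?_ ?_ ?_ ?_ <;>
          intro i hi <;> simp only [mem_Icc] at hi ⊢
        any_goals omega
        rw [bspline_uniform_knots hh ht]
        push_cast [Nat.cast_sub (by omega : i ≤ p + 1)]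
        ring
    _ = ∑ d ∈ range (p + 1), ((p : ℝ) + 1 - d) * cardinalBSpline p d := by
        refine sum_subset (fun d hd => by simp only [mem_Icc, mem_range] at hd ⊢; omega)
          fun d hd hd' => ?_
        obtain rfl : d = 0 := by simp only [mem_Icc, mem_range] at hd hd'; omega
        simp [cardinalBSpline_zero_right hp]
    _ = (p + 1) * ∑ d ∈ range (p + 1), cardinalBSpline p d
          - ∑ d ∈ range (p + 1), (d : ℝ) * cardinalBSpline p d := by
        simp only [sub_mul, sum_sub_distrib, mul_sum]
    _ = (p + 1) / 2 := by
        rw [sum_range_cardinalBSpline, sum_range_mul_cardinalBSpline hp]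
        ring

/-- For uniform knots, the quantity `T_1 = Σ_{i=1}^{p} i·B_i^p(t_{p+1})` equals `(p+1)/2`. -/
theorem bspline_T1 (p n : ℕ) (hp : 1 ≤ p) (hn : p + 1 ≤ n)
    (a h : ℝ) (hh : 0 < h) (t : ℕ → ℝ) (ht : ∀ i, t i = a + (i : ℝ) * h) :
    ∑ i ∈ Finset.Icc 1 p, (i : ℝ) * bspline t p i (t (p + 1)) = ((p : ℝ) + 1) / 2 :=
  bspline_T1_general p hp a h hh t ht
end
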